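/- Let K ≥ 3 be an integer and let w ≥ 1 be a real number. If Q is a random variable with the chi-squared distribution with K degrees of freedom, then P(Q ≥ K·w²) ≤ (1/2)·(√e/w)^K. -/

import Mathlib

/-!
Exponential tilting (the Chernoff bound, done on densities): for `s ≤ r`, on `[c, ∞)` the
Gamma(`a`, `r`) density is at most `(r / s) ^ a * exp (-(r - s) * c)` times the Gamma(`a`, `s`)
density, whose mass is at most `1`. For the `χ²(K)` tail at `K w²` the choice `s = 1 / (2 w²)`
gives the bound `w ^ K * exp (-K (w² - 1) / 2) = (w² e^{-w²/2}) ^ K * (√e / w) ^ K`, and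
`w² e^{-w²/2} ≤ 2 / e` with `(2 / e) ^ 3 < 1 / 2`.
-/

open MeasureTheory ProbabilityTheory Real

/-- The chi-squared distribution with `K` degrees of freedom: the Gamma distribution with
shape parameter `K/2` and rate parameter `1/2`. -/
noncomputable def chiSquaredMeasure (K : ℕ) : Measure ℝ :=
  gammaMeasure ((K : ℝ) / 2) (1 / 2)

lemma gammaPDFReal_eq_mul_gammaPDFReal (a : ℝ) {r s : ℝ} (hr : 0 ≤ r) (hs : 0 < s) (x : ℝ) :
    gammaPDFReal a r x = (r / s) ^ a * exp (-((r - s) * x)) * gammaPDFReal a s x := by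
  unfold gammaPDFReal
  split_ifs
  · have hsa : s ^ a ≠ 0 := (rpow_pos_of_pos hs a).ne'
    rw [div_rpow hr hs.le, show -(r * x) = -((r - s) * x) + -(s * x) by ring, exp_add]
    field_simp
  · simp

lemma gammaPDF_le_mul_gammaPDF {a r s : ℝ} (ha : 0 < a) (hs : 0 < s) (hsr : s ≤ r)
    {c x : ℝ} (hx : c ≤ x) :
    gammaPDF a r x ≤ ENNReal.ofReal ((r / s) ^ a * exp (-((r - s) * c))) * gammaPDF a s x := by
  have hr : 0 < r := hs.trans_le hsr
  rw [gammaPDF, gammaPDF, ← ENNReal.ofReal_mul (by positivity),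
    gammaPDFReal_eq_mul_gammaPDFReal a hr.le hs]
  have := gammaPDFReal_nonneg ha hs x
  have := sub_nonneg.2 hsr
  gcongr

lemma gammaMeasure_Ici_le {a r s : ℝ} (ha : 0 < a) (hs : 0 < s) (hsr : s ≤ r) (c : ℝ) :
    gammaMeasure a r (Set.Ici c) ≤ ENNReal.ofReal ((r / s) ^ a * exp (-((r - s) * c))) := by
  set C := (r / s) ^ a * exp (-((r - s) * c))
  calc gammaMeasure a r (Set.Ici c) = ∫⁻ x in Set.Ici c, gammaPDF a r x :=
        withDensity_apply _ measurableSet_Ici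
    _ ≤ ∫⁻ x in Set.Ici c, ENNReal.ofReal C * gammaPDF a s x :=
        setLIntegral_mono ((measurable_gammaPDFReal a s).ennreal_ofReal.const_mul _)
          fun _ hx ↦ gammaPDF_le_mul_gammaPDF ha hs hsr hx
    _ = ENNReal.ofReal C * ∫⁻ x in Set.Ici c, gammaPDF a s x :=
        lintegral_const_mul' _ _ ENNReal.ofReal_ne_top
    _ ≤ ENNReal.ofReal C * ∫⁻ x, gammaPDF a s x := by gcongr; exact Measure.restrict_le_self
    _ = ENNReal.ofReal C := by rw [lintegral_gammaPDF_eq_one ha hs, mul_one]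

lemma chiSquaredMeasure_Ici_le {K : ℕ} (hK : 0 < K) {w : ℝ} (hw : 1 ≤ w) :
    chiSquaredMeasure K (Set.Ici (K * w ^ 2))
      ≤ ENNReal.ofReal (w ^ K * exp (-(K * (w ^ 2 - 1) / 2))) := by
  have hw0 : 0 < w := one_pos.trans_le hw
  have hs_le : 1 / (2 * w ^ 2) ≤ 1 / 2 := by gcongr; nlinarith
  rw [chiSquaredMeasure]
  convert gammaMeasure_Ici_le (a := (K : ℝ) / 2) (by positivity) (by positivity) hs_le _ using 3
  · rw [show (1 : ℝ) / 2 / (1 / (2 * w ^ 2)) = w ^ 2 by field_simp, ← rpow_natCast w 2,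
      ← rpow_mul hw0.le, ← rpow_natCast]
    congr 1
    push_cast
    ring
  · congr 1
    field_simp

lemma sq_mul_exp_neg_half_sq_le (w : ℝ) : w ^ 2 * exp (-(w ^ 2 / 2)) ≤ 2 * exp (-1) := by
  linarith [mul_exp_neg_le_exp_neg_one (w ^ 2 / 2)]

lemma two_mul_exp_neg_one_pow_le_half {K : ℕ} (hK : 3 ≤ K) : (2 * exp (-1)) ^ K ≤ 1 / 2 := by
  have he := exp_one_gt_d9
  have h_le_one : 2 * exp (-1) ≤ 1 := by
    rw [exp_neg, ← div_eq_mul_inv, div_le_one (exp_pos 1)]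
    linarith
  calc (2 * exp (-1)) ^ K ≤ (2 * exp (-1)) ^ 3 := pow_le_pow_of_le_one (by positivity) h_le_one hK
    _ = 8 / exp 1 ^ 3 := by rw [exp_neg]; field_simp; norm_num
    _ ≤ 1 / 2 := by
      rw [div_le_div_iff₀ (by positivity) two_pos]
      nlinarith [pow_le_pow_left₀ (by norm_num) he.le 3]

lemma pow_mul_exp_neg_le {K : ℕ} (hK : 3 ≤ K) {w : ℝ} (hw : 0 < w) :
    w ^ K * exp (-(K * (w ^ 2 - 1) / 2)) ≤ 1 / 2 * (√(exp 1) / w) ^ K := by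
  calc w ^ K * exp (-(K * (w ^ 2 - 1) / 2))
        = (w ^ 2 * exp (-(w ^ 2 / 2))) ^ K * (√(exp 1) / w) ^ K := by
        have hbase :
            w ^ 2 * exp (-(w ^ 2 / 2)) * (exp (1 / 2) / w) = w * exp (-((w ^ 2 - 1) / 2)) := by
          rw [show -((w ^ 2 - 1) / 2) = -(w ^ 2 / 2) + 1 / 2 by ring, exp_add]
          field_simp
        rw [← mul_pow, ← exp_half, hbase, mul_pow, ← exp_nat_mul]
        congr 2
        ring
    _ ≤ (2 * exp (-1)) ^ K * (√(exp 1) / w) ^ K := by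
      have := sq_mul_exp_neg_half_sq_le w
      gcongr
    _ ≤ 1 / 2 * (√(exp 1) / w) ^ K := by
      gcongr
      exact two_mul_exp_neg_one_pow_le_half hK

theorem chiSq_upper_tail_bound_general
    {Ω : Type*} [MeasurableSpace Ω] (P : Measure Ω)
    (K : ℕ) (hK : 3 ≤ K) (w : ℝ) (hw : 1 ≤ w)
    (Q : Ω → ℝ) (hQ : Measurable Q) (hlaw : P.map Q = chiSquaredMeasure K) :
    P {ω | (K : ℝ) * w ^ 2 ≤ Q ω}
      ≤ ENNReal.ofReal ((1 / 2) * (Real.sqrt (Real.exp 1) / w) ^ K) := by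
  calc P {ω | (K : ℝ) * w ^ 2 ≤ Q ω} = chiSquaredMeasure K (Set.Ici (K * w ^ 2)) := by
        rw [← hlaw, Measure.map_apply hQ measurableSet_Ici]; rfl
    _ ≤ ENNReal.ofReal (w ^ K * exp (-(K * (w ^ 2 - 1) / 2))) :=
        chiSquaredMeasure_Ici_le (by omega) hw
    _ ≤ _ := ENNReal.ofReal_le_ofReal (pow_mul_exp_neg_le hK (one_pos.trans_le hw))

theorem chiSq_upper_tail_bound
    {Ω : Type*} [MeasurableSpace Ω] (P : Measure Ω) [IsProbabilityMeasure P]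
    (K : ℕ) (hK : 3 ≤ K) (w : ℝ) (hw : 1 ≤ w)
    (Q : Ω → ℝ) (hQ : Measurable Q) (hlaw : P.map Q = chiSquaredMeasure K) :
    P {ω | (K : ℝ) * w ^ 2 ≤ Q ω}
      ≤ ENNReal.ofReal ((1 / 2) * (Real.sqrt (Real.exp 1) / w) ^ K) :=
  chiSq_upper_tail_bound_general P K hK w hw Q hQ hlaw
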